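/- arXiv:2509.06302 — 5 statements merged into one kernel-verified Lean document; each statement's English description precedes it below -/
import Mathlib

section
/- Let E₁ ⊆ E₂ ⊆ ⋯ be a chain of finite sets with union E, and let (E,h) be a polymatroid of finite type. Then h is almost entropic if and only if the restriction of h to P(Eₙ) is almost entropic for every n. -/
/-!
Restricting a random vector to a subfamily of its coordinates restricts its entropy function,
and a family indexed by `C n` becomes one indexed by all of `α` by giving each index outside
`C n` a constant variable; this makes entropic functions on `α` and on `C n` correspond.
Conversely, since `C n` is finite, an almost entropic restriction is uniformly
`1/(n+1)`-close to an entropic function on `C n`; its extension takes the value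
`≈ h (S ∩ C n)` at `S`, and `h (S ∩ C n) → h S` because `h` is monotone and of finite type
while every finite subset of `S` lies in some `S ∩ C n`.
-/

open scoped Classical

def IsPolymatroid {E : Type*} (f : Set E → ℝ) : Prop :=
  f ∅ = 0 ∧ (∀ A B : Set E, A ⊆ B → f A ≤ f B) ∧
    ∀ A B : Set E, f (A ∪ B) + f (A ∩ B) ≤ f A + f B

def FiniteType {E : Type*} (f : Set E → ℝ) : Prop :=
  ∀ S : Set E, f S = sSup (f '' {F | F ⊆ S ∧ F.Finite})

/-- Joint entropy of the family `(X_i)_{i ∈ S}` on a finite probability space. -/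
noncomputable def jointEntropy {α Ω : Type} [Fintype Ω] (p : Ω → ℝ)
    {V : α → Type} (X : ∀ i, Ω → V i) (S : Set α) : ℝ :=
  ∑ ω : Ω, p ω * Real.logb 2
    (1 / ∑ ω' : Ω, if (∀ i ∈ S, X i ω' = X i ω) then p ω' else 0)

/-- An entropic polymatroid: the joint entropy function of a family of random
variables on a finite probability space. -/
def IsEntropic {α : Type} (h : Set α → ℝ) : Prop :=
  ∃ (Ω : Type) (_ : Fintype Ω) (p : Ω → ℝ) (V : α → Type) (X : ∀ i, Ω → V i),
    (∀ ω, 0 ≤ p ω) ∧ (∑ ω, p ω) = 1 ∧ ∀ S : Set α, h S = jointEntropy p X S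

/-- Almost entropic: a pointwise limit of entropic polymatroids. -/
def IsAlmostEntropic {α : Type} (h : Set α → ℝ) : Prop :=
  ∃ g : ℕ → Set α → ℝ, (∀ n, IsEntropic (g n)) ∧
    ∀ S : Set α, Filter.Tendsto (fun n => g n S) Filter.atTop (nhds (h S))

open Filter Topology

lemma jointEntropy_congr {α β Ω : Type} [Fintype Ω] (p : Ω → ℝ)
    {V : α → Type} {W : β → Type} (X : ∀ i, Ω → V i) (Y : ∀ j, Ω → W j)
    (S : Set α) (T : Set β)
    (hXY : ∀ ω ω' : Ω, (∀ i ∈ S, X i ω' = X i ω) ↔ (∀ j ∈ T, Y j ω' = Y j ω)) :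
    jointEntropy p X S = jointEntropy p Y T := by
  unfold jointEntropy
  refine Finset.sum_congr rfl fun ω _ => ?_
  simp only [hXY ω]

namespace IsEntropic

lemma restrict {α : Type} (P : Set α) {e : Set α → ℝ} (he : IsEntropic e) :
    IsEntropic (fun S : Set P => e (Subtype.val '' S)) := by
  obtain ⟨Ω, _, p, V, X, hp, hsum, hX⟩ := he
  refine ⟨Ω, _, p, fun j : P => V j, fun j => X j, hp, hsum, fun S => ?_⟩
  refine (hX _).trans <| jointEntropy_congr p X _ _ S fun ω ω' =>
    ⟨fun H j hj => H j ⟨j, hj, rfl⟩, ?_⟩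
  rintro H _ ⟨j, hj, rfl⟩
  exact H j hj

lemma extend {α : Type} (P : Set α) {e : Set P → ℝ} (he : IsEntropic e) :
    IsEntropic (fun S : Set α => e (Subtype.val ⁻¹' S)) := by
  obtain ⟨Ω, _, p, V, X, hp, hsum, hX⟩ := he
  -- outside `P` the variable takes values in a one-point type
  refine ⟨Ω, _, p, fun i : α => ∀ hi : i ∈ P, V ⟨i, hi⟩,
    fun i ω hi => X ⟨i, hi⟩ ω, hp, hsum, fun S => ?_⟩
  refine (hX _).trans (jointEntropy_congr p _ X _ (Subtype.val ⁻¹' S) fun ω ω' => ?_).symm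
  exact ⟨fun H j hj => congrFun (H j hj) j.2, fun H i hi => funext fun hiP => H ⟨i, hiP⟩ hi⟩

end IsEntropic

namespace IsAlmostEntropic

lemma restrict {α : Type} (P : Set α) {h : Set α → ℝ} (hh : IsAlmostEntropic h) :
    IsAlmostEntropic (fun S : Set P => h (Subtype.val '' S)) :=
  let ⟨g, hg, hgh⟩ := hh
  ⟨fun k S => g k (Subtype.val '' S), fun k => (hg k).restrict P, fun _ => hgh _⟩

lemma exists_isEntropic_abs_sub_lt {β : Type} [Finite β] {h : Set β → ℝ}
    (hh : IsAlmostEntropic h) {ε : ℝ} (hε : 0 < ε) :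
    ∃ e, IsEntropic e ∧ ∀ S, |e S - h S| < ε := by
  obtain ⟨g, hg, hgh⟩ := hh
  have hclose : ∀ᶠ k in atTop, ∀ S, |g k S - h S| < ε := eventually_all.2 fun S => by
    simpa [Real.dist_eq] using (hgh S).eventually (Metric.ball_mem_nhds _ hε)
  obtain ⟨k, hk⟩ := hclose.exists
  exact ⟨g k, hg k, hk⟩

end IsAlmostEntropic

lemma isAlmostEntropic_of_tendsto_inter {α : Type} (C : ℕ → Set α) (hfin : ∀ n, (C n).Finite)
    {h : Set α → ℝ} (hres : ∀ n, IsAlmostEntropic (fun S : Set (C n) => h (Subtype.val '' S)))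
    (hlim : ∀ S, Tendsto (fun n => h (S ∩ C n)) atTop (𝓝 (h S))) :
    IsAlmostEntropic h := by
  have hpick : ∀ n : ℕ, ∃ e : Set (C n) → ℝ, IsEntropic e ∧
      ∀ S, |e S - h (Subtype.val '' S)| < 1 / (n + 1) := fun n =>
    haveI := (hfin n).to_subtype
    (hres n).exists_isEntropic_abs_sub_lt Nat.one_div_pos_of_nat
  choose e he heh using hpick
  refine ⟨fun n S => e n (Subtype.val ⁻¹' S), fun n => (he n).extend (C n), fun S => ?_⟩
  have hgap : Tendsto (fun n => e n (Subtype.val ⁻¹' S) - h (S ∩ C n)) atTop (𝓝 0) := by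
    refine squeeze_zero_norm (fun n => ?_) tendsto_one_div_add_atTop_nhds_zero_nat
    have hn := heh n (Subtype.val ⁻¹' S)
    rw [Subtype.image_preimage_coe, Set.inter_comm] at hn
    exact hn.le
  simpa using hgap.add (hlim S)

lemma FiniteType.tendsto_inter {α : Type} {h : Set α → ℝ} (hft : FiniteType h)
    (hmonoh : Monotone h) {C : ℕ → Set α} (hmono : Monotone C) (hunion : ⋃ n, C n = Set.univ)
    (S : Set α) : Tendsto (fun n => h (S ∩ C n)) atTop (𝓝 (h S)) := by
  refine tendsto_atTop_isLUB
    (fun m n hmn => hmonoh (Set.inter_subset_inter_right S (hmono hmn))) ⟨?_, fun b hb => ?_⟩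
  · rintro _ ⟨n, rfl⟩
    exact hmonoh Set.inter_subset_left
  · rw [hft S]
    refine csSup_le ⟨h ∅, ∅, ⟨Set.empty_subset S, Set.finite_empty⟩, rfl⟩ ?_
    rintro _ ⟨F, ⟨hFS, hF⟩, rfl⟩
    obtain ⟨N, hFN⟩ : ∃ N, F ⊆ C N := by
      simpa using hmono.directed_le.exists_mem_subset_of_finset_subset_biUnion
        (s := hF.toFinset) (by simp [hunion])
    exact (hmonoh (Set.subset_inter hFS hFN)).trans (hb ⟨N, rfl⟩)

theorem almostEntropic_iff_restrictions {α : Type} (C : ℕ → Set α)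
    (hmono : Monotone C) (hfin : ∀ n, (C n).Finite) (hunion : ⋃ n, C n = Set.univ)
    (h : Set α → ℝ) (hpoly : IsPolymatroid h) (hft : FiniteType h) :
    IsAlmostEntropic h ↔
      ∀ n, IsAlmostEntropic (fun S : Set (C n) => h (Subtype.val '' S)) :=
  ⟨fun hh n => hh.restrict (C n), fun hres => isAlmostEntropic_of_tendsto_inter C hfin hres
    (hft.tendsto_inter (fun A B => hpoly.2.1 A B) hmono hunion)⟩
end

section
/- Let (E,f,S) be a (possibly incoherent) PDG of rank r. Let s⁽¹⁾,…,s⁽ⁿ⁾ ∈ S and for each t let {i_t,j_t} be distinct index pairs in {1,…,r} with {i_t,j_t} ≠ {i_u,j_u} for t ≠ u, such that each s⁽ᵗ⁾_{i_t,j_t} ∈ E. If the graph on vertex set ∪_t {i_t,j_t} with edges {i_t,j_t} contains no cycle, then the set A = {s⁽ᵗ⁾_{i_t,j_t} : 1 ≤ t ≤ n} satisfies f(A) = n. -/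
/-!
Induction on `n`. A nonempty finite forest has a vertex `v` of degree one; let `t₀` be its
edge. Every other element lies on a line spanned by two basis elements other than `b v`, hence
in the closure of the hyperplane `H` spanned by the rest of the basis, while `H` together with
the element of `t₀` spans `b v` and hence the whole basis. Submodularity then shows that the
element of `t₀` raises the rank of the others by at least `f (H ∪ {s_{t₀}}) - f H = 1`, and
subadditivity by at most `f {s_{t₀}} = 1`.
-/

structure IncoherentPDG (E S : Type*) (r : ℕ) where
  f : Set E → ℝ
  f_empty : f ∅ = 0
  f_mono : ∀ A B : Set E, A ⊆ B → f A ≤ f B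
  f_submod : ∀ A B : Set E, f (A ∪ B) + f (A ∩ B) ≤ f A + f B
  inv : S → S
  e : S
  inv_invol : ∀ s, inv (inv s) = s
  inv_e : inv e = e
  b : Fin r → E
  rank_basis : ∀ A : Finset (Fin r), f (b '' (A : Set (Fin r))) = A.card
  present : S → Fin r → Fin r → Prop
  elt : S → Fin r → Fin r → E
  present_symm : ∀ s i j, present s i j ↔ present (inv s) j i
  elt_symm : ∀ s i j, elt s i j = elt (inv s) j i
  frame : ∀ s i j, i ≠ j → present s i j → f {b i, b j, elt s i j} = 2
  rank_elt : ∀ s i j, i ≠ j → present s i j → f {elt s i j} = 1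
  rank_b_elt : ∀ s i j, i ≠ j → present s i j → f {b i, elt s i j} = 2

namespace SimpleGraph

theorem IsAcyclic.exists_adj_forall_adj_eq {V : Type*} {G : SimpleGraph V} [Finite G.edgeSet]
    (hG : G.IsAcyclic) {a b : V} (hab : G.Adj a b) :
    ∃ u x, G.Adj u x ∧ ∀ y, G.Adj u y → y = x := by
  have : Nonempty V := ⟨a⟩
  obtain ⟨u, v, p, hp, hmax⟩ := Walk.exists_isPath_forall_isPath_length_le_length G
  have hnil : ¬p.Nil := fun h => by
    simpa [h.length_eq_zero] using hmax _ _ _ (Path.singleton hab).2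
  refine ⟨u, p.snd, p.adj_snd hnil, fun y hy => hG.eq_snd_of_adj_start hp hy ?_⟩
  by_contra hyp
  simpa using hmax _ _ (Walk.cons hy.symm p) (hp.cons hyp)

end SimpleGraph

theorem exists_leaf_of_isAcyclic_fromEdgeSet {V ι : Type*} [Finite V] [Nonempty ι]
    (I J : ι → V) (hne : ∀ t, I t ≠ J t)
    (hpairs : ∀ t u, t ≠ u → s(I t, J t) ≠ s(I u, J u))
    (hacyc : (SimpleGraph.fromEdgeSet {x | ∃ t, x = s(I t, J t)}).IsAcyclic) :
    ∃ t₀ v, (v = I t₀ ∨ v = J t₀) ∧ ∀ t, t ≠ t₀ → I t ≠ v ∧ J t ≠ v := by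
  set G := SimpleGraph.fromEdgeSet {x | ∃ t, x = s(I t, J t)}
  have hadj : ∀ t, G.Adj (I t) (J t) := fun t =>
    (SimpleGraph.fromEdgeSet_adj _).2 ⟨⟨t, rfl⟩, hne t⟩
  obtain ⟨u, x, hux, hleaf⟩ := hacyc.exists_adj_forall_adj_eq (hadj (Classical.arbitrary ι))
  obtain ⟨⟨t₀, ht₀⟩, -⟩ := (SimpleGraph.fromEdgeSet_adj _).1 hux
  refine ⟨t₀, u, ?_, fun t ht => ⟨fun hI => ?_, fun hJ => ?_⟩⟩
  · rcases Sym2.eq_iff.mp ht₀ with ⟨h, -⟩ | ⟨h, -⟩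
    exacts [Or.inl h, Or.inr h]
  · refine hpairs t t₀ ht ?_
    rw [← ht₀, hI, hleaf (J t) (hI ▸ hadj t)]
  · refine hpairs t t₀ ht ?_
    rw [← ht₀, hJ, hleaf (I t) (hJ ▸ (hadj t).symm), Sym2.eq_swap]

structure IsPolymatroid_s8 {α : Type*} (f : Set α → ℝ) : Prop where
  map_empty : f ∅ = 0
  mono : Monotone f
  submod : ∀ A B, f (A ∪ B) + f (A ∩ B) ≤ f A + f B

namespace IsPolymatroid_s8

variable {α : Type*} {f : Set α → ℝ}

theorem insert_eq_of_subset (h : IsPolymatroid_s8 f) {X Y : Set α} {x : α} (hYX : Y ⊆ X)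
    (hY : f (insert x Y) = f Y) : f (insert x X) = f X := by
  have hsub := h.submod (insert x Y) X
  rw [Set.insert_union, Set.union_eq_self_of_subset_left hYX, hY] at hsub
  have hinter := h.mono (Set.subset_inter (Set.subset_insert x Y) hYX)
  have hins := h.mono (Set.subset_insert x X)
  linarith

theorem union_eq_of_forall_insert_eq (h : IsPolymatroid_s8 f) {X A : Set α} (hA : A.Finite)
    (hX : ∀ a ∈ A, f (insert a X) = f X) : f (X ∪ A) = f X := by
  induction A, hA using Set.Finite.induction_on with
  | empty => rw [Set.union_empty]
  | @insert a A _ _ ih =>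
    rw [Set.union_insert, h.insert_eq_of_subset Set.subset_union_left (hX a (Set.mem_insert a A)),
      ih fun a' ha' => hX a' (Set.mem_insert_of_mem a ha')]

theorem insert_le_add_singleton (h : IsPolymatroid_s8 f) (A : Set α) (a : α) :
    f (insert a A) ≤ f A + f {a} := by
  have hsub := h.submod A {a}
  have hnonneg : 0 ≤ f (A ∩ {a}) := h.map_empty ▸ h.mono (Set.empty_subset _)
  rw [Set.union_singleton] at hsub
  linarith

theorem add_sub_le_insert_of_union_eq (h : IsPolymatroid_s8 f) {X A : Set α} (a : α)
    (hXA : f (X ∪ A) = f X) : f A + (f (insert a X) - f X) ≤ f (insert a A) := by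
  have hsub := h.submod (insert a A) (X ∪ A)
  have hunion := h.mono (show insert a X ⊆ insert a A ∪ (X ∪ A) by grind)
  have hinter := h.mono (show A ⊆ insert a A ∩ (X ∪ A) by grind)
  linarith

end IsPolymatroid_s8

namespace IncoherentPDG

variable {E S : Type*} {r : ℕ} (P : IncoherentPDG E S r)

theorem isPolymatroid : IsPolymatroid_s8 P.f := ⟨P.f_empty, P.f_mono, P.f_submod⟩

theorem f_image_b (A : Set (Fin r)) : P.f (P.b '' A) = A.ncard := by
  classical
  simpa [Set.ncard_eq_toFinset_card'] using P.rank_basis A.toFinset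

theorem f_pair_b {i j : Fin r} (hij : i ≠ j) : P.f {P.b i, P.b j} = 2 := by
  simpa [Set.image_pair, Set.ncard_pair hij] using P.f_image_b {i, j}

theorem f_insert_elt_eq {X : Set E} {s : S} {i j : Fin r} (hij : i ≠ j) (hp : P.present s i j)
    (hi : P.b i ∈ X) (hj : P.b j ∈ X) : P.f (insert (P.elt s i j) X) = P.f X := by
  refine P.isPolymatroid.insert_eq_of_subset (Y := {P.b i, P.b j}) (by grind) ?_
  rw [Set.insert_comm, Set.pair_comm (P.elt s i j), P.frame s i j hij hp, P.f_pair_b hij]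

theorem f_insert_b_right_eq {X : Set E} {s : S} {i j : Fin r} (hij : i ≠ j)
    (hp : P.present s i j) (hi : P.b i ∈ X) (hg : P.elt s i j ∈ X) :
    P.f (insert (P.b j) X) = P.f X := by
  refine P.isPolymatroid.insert_eq_of_subset (Y := {P.b i, P.elt s i j}) (by grind) ?_
  rw [Set.insert_comm, P.frame s i j hij hp, P.rank_b_elt s i j hij hp]

theorem f_insert_b_left_eq {X : Set E} {s : S} {i j : Fin r} (hij : i ≠ j)
    (hp : P.present s i j) (hj : P.b j ∈ X) (hg : P.elt s i j ∈ X) :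
    P.f (insert (P.b i) X) = P.f X := by
  rw [P.elt_symm] at hg
  exact P.f_insert_b_right_eq hij.symm ((P.present_symm s i j).1 hp) hj hg

theorem f_range_elt_eq_add_one {ι : Type*} [Finite ι] (s : ι → S) (I J : ι → Fin r)
    (hne : ∀ t, I t ≠ J t) (hpres : ∀ t, P.present (s t) (I t) (J t)) {t₀ : ι} {v : Fin r}
    (hv : v = I t₀ ∨ v = J t₀) (hleaf : ∀ t, t ≠ t₀ → I t ≠ v ∧ J t ≠ v) :
    P.f (Set.range fun t => P.elt (s t) (I t) (J t)) =
      P.f ((fun t => P.elt (s t) (I t) (J t)) '' {t₀}ᶜ) + 1 := by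
  set g := fun t => P.elt (s t) (I t) (J t)
  set X := P.b '' {v}ᶜ
  have hbX : ∀ i, i ≠ v → P.b i ∈ X := fun i hi => Set.mem_image_of_mem _ hi
  have hrest : P.f (X ∪ g '' {t₀}ᶜ) = P.f X := by
    refine P.isPolymatroid.union_eq_of_forall_insert_eq ((Set.toFinite _).image g) ?_
    rintro _ ⟨t, ht, rfl⟩
    exact P.f_insert_elt_eq (hne t) (hpres t) (hbX _ (hleaf t ht).1) (hbX _ (hleaf t ht).2)
  have hspan : P.f (insert (P.b v) (insert (g t₀) X)) = P.f (insert (g t₀) X) := by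
    rcases hv with rfl | rfl
    · exact P.f_insert_b_left_eq (hne t₀) (hpres t₀)
        (Set.mem_insert_of_mem _ (hbX _ (hne t₀).symm)) (Set.mem_insert _ _)
    · exact P.f_insert_b_right_eq (hne t₀) (hpres t₀)
        (Set.mem_insert_of_mem _ (hbX _ (hne t₀))) (Set.mem_insert _ _)
  have hjump : P.f X + 1 ≤ P.f (insert (g t₀) X) := by
    have hX : P.f X + 1 = P.f (Set.range P.b) := by
      rw [← Set.image_univ, P.f_image_b, P.f_image_b, Set.ncard_univ,
        ← Set.ncard_compl_add_ncard {v}, Set.ncard_singleton, Nat.cast_add, Nat.cast_one]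
    have hB : Set.range P.b ⊆ insert (P.b v) (insert (g t₀) X) := by
      rintro _ ⟨i, rfl⟩
      rcases eq_or_ne i v with rfl | hi
      exacts [Set.mem_insert _ _, Set.mem_insert_of_mem _ (Set.mem_insert_of_mem _ (hbX i hi))]
    linarith [P.f_mono _ _ hB]
  have hrange : Set.range g = insert (g t₀) (g '' {t₀}ᶜ) := by
    rw [← Set.image_insert_eq, Set.insert_eq, Set.union_compl_self, Set.image_univ]
  apply le_antisymm
  · rw [hrange, ← P.rank_elt _ _ _ (hne t₀) (hpres t₀)]
    exact P.isPolymatroid.insert_le_add_singleton _ _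
  · have := P.isPolymatroid.add_sub_le_insert_of_union_eq (g t₀) hrest
    rw [hrange]
    linarith

end IncoherentPDG

/-- Acyclic independence in a (possibly incoherent) PDG. -/
theorem acyclic_independence {E S : Type*} {r n : ℕ} (P : IncoherentPDG E S r)
    (s : Fin n → S) (I J : Fin n → Fin r)
    (hne : ∀ t, I t ≠ J t)
    (hpres : ∀ t, P.present (s t) (I t) (J t))
    (hpairs : ∀ t u : Fin n, t ≠ u → Sym2.mk (I t) (J t) ≠ Sym2.mk (I u) (J u))
    (hacyc : (SimpleGraph.fromEdgeSet
        {x : Sym2 (Fin r) | ∃ t, x = Sym2.mk (I t) (J t)}).IsAcyclic) :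
    P.f (Set.range fun t => P.elt (s t) (I t) (J t)) = n := by
  induction n with
  | zero => simp [P.f_empty]
  | succ n ih =>
    obtain ⟨t₀, v, hv, hleaf⟩ := exists_leaf_of_isAcyclic_fromEdgeSet I J hne hpairs hacyc
    have hrest := ih (s ∘ t₀.succAbove) (I ∘ t₀.succAbove) (J ∘ t₀.succAbove)
      (fun t => hne _) (fun t => hpres _)
      (fun t u htu => hpairs _ _ (Fin.succAbove_right_injective.ne htu))
      (hacyc.anti (SimpleGraph.fromEdgeSet_mono ?_))
    · rw [P.f_range_elt_eq_add_one s I J hne hpres hv hleaf, ← Fin.range_succAbove t₀,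
        ← Set.range_comp]
      push_cast
      rw [← hrest]
      rfl
    · rintro _ ⟨t, rfl⟩
      exact ⟨t₀.succAbove t, rfl⟩
end

section
/- Let (E,f,S) be a (possibly incoherent) PDG. Any pair {x,y} of distinct elements of E satisfies f(x,y)=2, unless x = s_{i,j} and y = s'_{i,j} for some s,s' ∈ S and the same index pair {i,j}. -/
/-!
Attach to each element its support: `{i}` for `b i` and `{i, j}` for `s_{i,j}`. An element `x`
with support `σ` lies in the closure of `b '' σ` but not in that of `b '' L` for any `L ⊂ σ`;
one application of submodularity upgrades this to `f (b '' K ∪ {x}) ≥ |K| + 1` whenever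
`σ ⊈ K`. If `x` and `y` have supports `σ ⊈ τ`, submodularity of `{x, y}` against
`b '' τ ∪ {y}` then forces `f {x, y} ≥ (|τ| + 1) + 1 - |τ| = 2`. Distinct supports are exactly
what the exceptional case excludes.
-/

namespace IncoherentPDG

variable {E S : Type*} {r : ℕ} (P : IncoherentPDG E S r)

theorem f_nonneg (A : Set E) : 0 ≤ P.f A := by
  simpa [P.f_empty] using P.f_mono ∅ A (Set.empty_subset A)

theorem f_union_le (A B : Set E) : P.f (A ∪ B) ≤ P.f A + P.f B := by
  linarith [P.f_submod A B, P.f_nonneg (A ∩ B)]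

theorem rank_b_elt_right {s : S} {i j : Fin r} (hij : i ≠ j) (hp : P.present s i j) :
    P.f {P.b j, P.elt s i j} = 2 := by
  rw [P.elt_symm]
  exact P.rank_b_elt _ j i hij.symm ((P.present_symm s i j).mp hp)

/-- `x ∈ cl (b '' σ)`, while `x ∉ cl (b '' L)` for every `L ⊂ σ`. -/
def IsGenericOn (σ : Finset (Fin r)) (x : E) : Prop :=
  P.f (P.b '' σ ∪ {x}) = σ.card ∧ ∀ L ⊂ σ, P.f (P.b '' L ∪ {x}) = L.card + 1

variable {P}

theorem IsGenericOn.f_singleton {σ : Finset (Fin r)} {x : E} (hx : P.IsGenericOn σ x)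
    (hσ : σ.Nonempty) : P.f {x} = 1 := by
  simpa using hx.2 ∅ hσ.empty_ssubset

theorem IsGenericOn.card_add_one_le {σ K : Finset (Fin r)} {x : E} (hx : P.IsGenericOn σ x)
    (hK : ¬ σ ⊆ K) : (K.card : ℝ) + 1 ≤ P.f (P.b '' K ∪ {x}) := by
  have hKσ : K ∩ σ ⊂ σ :=
    Finset.inter_subset_right.ssubset_of_not_subset fun h => hK (h.trans Finset.inter_subset_left)
  have hunion : P.f (P.b '' ↑(K ∪ σ)) ≤ P.f ((P.b '' K ∪ {x}) ∪ (P.b '' σ ∪ {x})) :=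
    P.f_mono _ _ (by rw [Finset.coe_union, Set.image_union]; grind)
  have hinter : P.f (P.b '' ↑(K ∩ σ) ∪ {x}) ≤ P.f ((P.b '' K ∪ {x}) ∩ (P.b '' σ ∪ {x})) :=
    P.f_mono _ _ (by rw [Finset.coe_inter]; grind)
  rw [P.rank_basis] at hunion
  rw [hx.2 _ hKσ] at hinter
  have hcard : ((K ∪ σ).card : ℝ) + (K ∩ σ).card = K.card + σ.card := by
    exact_mod_cast Finset.card_union_add_card_inter K σ
  linarith [P.f_submod (P.b '' K ∪ {x}) (P.b '' σ ∪ {x}), hx.1]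

theorem IsGenericOn.f_pair_eq_two_of_not_subset {σ τ : Finset (Fin r)} {x y : E}
    (hx : P.IsGenericOn σ x) (hy : P.IsGenericOn τ y) (hσ : σ.Nonempty) (hτ : τ.Nonempty)
    (hστ : ¬ σ ⊆ τ) : P.f {x, y} = 2 := by
  have hunion : P.f (P.b '' τ ∪ {x}) ≤ P.f ({x, y} ∪ (P.b '' τ ∪ {y})) :=
    P.f_mono _ _ (by grind)
  have hinter : P.f {y} ≤ P.f ({x, y} ∩ (P.b '' τ ∪ {y})) :=
    P.f_mono _ _ (by grind)
  have hupper : P.f {x, y} ≤ P.f {x} + P.f {y} := P.f_union_le {x} {y}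
  linarith [P.f_submod {x, y} (P.b '' τ ∪ {y}), hx.card_add_one_le hστ, hy.1,
    hx.f_singleton hσ, hy.f_singleton hτ]

theorem IsGenericOn.f_pair_eq_two {σ τ : Finset (Fin r)} {x y : E}
    (hx : P.IsGenericOn σ x) (hy : P.IsGenericOn τ y) (hσ : σ.Nonempty) (hτ : τ.Nonempty)
    (hστ : σ ≠ τ) : P.f {x, y} = 2 := by
  by_cases h : σ ⊆ τ
  · rw [Set.pair_comm]
    exact hy.f_pair_eq_two_of_not_subset hx hτ hσ fun h' => hστ (h.antisymm h')
  · exact hx.f_pair_eq_two_of_not_subset hy hσ hτ h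

variable (P)

theorem isGenericOn_b (i : Fin r) : P.IsGenericOn {i} (P.b i) := by
  have h := P.rank_basis {i}
  refine ⟨by simpa using h, fun L hL => ?_⟩
  obtain rfl := Finset.ssubset_singleton_iff.mp hL
  simpa using h

theorem isGenericOn_elt {s : S} {i j : Fin r} (hij : i ≠ j) (hp : P.present s i j) :
    P.IsGenericOn {i, j} (P.elt s i j) := by
  refine ⟨?_, fun L hL => ?_⟩
  · rw [Finset.card_pair hij, Nat.cast_ofNat, ← P.frame s i j hij hp]
    congr 1
    grind
  · have hL' : (L : Set (Fin r)) ⊆ {i, j} := by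
      rw [← Finset.coe_pair]; exact Finset.coe_subset.mpr hL.subset
    rcases Set.subset_pair_iff_eq.mp hL' with h | h | h | h
    · obtain rfl : L = ∅ := Finset.coe_eq_empty.mp h
      simpa using P.rank_elt s i j hij hp
    · obtain rfl : L = {i} := Finset.coe_eq_singleton.mp h
      simpa [Set.pair_comm (P.elt s i j), one_add_one_eq_two] using P.rank_b_elt s i j hij hp
    · obtain rfl : L = {j} := Finset.coe_eq_singleton.mp h
      simpa [Set.pair_comm (P.elt s i j), one_add_one_eq_two] using P.rank_b_elt_right hij hp
    · exact absurd (Finset.coe_eq_pair.mp h) hL.ne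

end IncoherentPDG

/-- Any pair of distinct elements of a (possibly incoherent) PDG has rank 2,
unless both are generator copies on the same index pair. -/
theorem pair_independence {E S : Type*} {r : ℕ} (P : IncoherentPDG E S r)
    (x y : E) (hxy : x ≠ y)
    (hx : (∃ i, x = P.b i) ∨
      ∃ s i j, i ≠ j ∧ P.present s i j ∧ x = P.elt s i j)
    (hy : (∃ i, y = P.b i) ∨
      ∃ s i j, i ≠ j ∧ P.present s i j ∧ y = P.elt s i j)
    (hexc : ¬ ∃ (s s' : S) (i j : Fin r), i ≠ j ∧ P.present s i j ∧
      P.present s' i j ∧ x = P.elt s i j ∧ y = P.elt s' i j) :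
    P.f {x, y} = 2 := by
  rcases hx with ⟨i, rfl⟩ | ⟨s, i, j, hij, hp, rfl⟩ <;>
    rcases hy with ⟨k, rfl⟩ | ⟨s', k, l, hkl, hp', rfl⟩
  · refine (P.isGenericOn_b i).f_pair_eq_two (P.isGenericOn_b k) (by simp) (by simp) ?_
    exact fun h => hxy (congrArg P.b (Finset.singleton_inj.mp h))
  · refine (P.isGenericOn_b i).f_pair_eq_two (P.isGenericOn_elt hkl hp') (by simp) (by simp) ?_
    exact fun h => by simpa [Finset.card_pair hkl] using congrArg Finset.card h
  · refine (P.isGenericOn_elt hij hp).f_pair_eq_two (P.isGenericOn_b k) (by simp) (by simp) ?_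
    exact fun h => by simpa [Finset.card_pair hij] using congrArg Finset.card h
  · refine (P.isGenericOn_elt hij hp).f_pair_eq_two (P.isGenericOn_elt hkl hp') (by simp)
      (by simp) fun h => hexc ?_
    have hpair : ({i, j} : Set (Fin r)) = {k, l} := by
      rw [← Finset.coe_pair, ← Finset.coe_pair, h]
    rcases Set.pair_eq_pair_iff.mp hpair with ⟨rfl, rfl⟩ | ⟨rfl, rfl⟩
    · exact ⟨s, s', i, j, hij, hp, hp', rfl, rfl⟩
    · exact ⟨s, P.inv s', i, j, hij, hp, (P.present_symm s' j i).mp hp', rfl, P.elt_symm s' j i⟩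
end

section
/- Let (E,f,S) be a PDG of rank 4 in which Desargues-type relator propagation holds in the following sense: whenever f(s_{i,j}, s'_{j,k}, s''_{k,i}) = 2 for some distinct i,j,k,m permuting {1,2,3,4}, also f(s_{i,m}, s'_{m,k}, s''_{k,i}) = 2. Then if f(s_{p,q}, s'_{q,r}, s''_{r,p}) = 2 for one triple of distinct indices (p,q,r) in {1,…,4}, the same holds for every triple of distinct indices, i.e. (s,s',s'') is a relator. -/
/-- A partial Dowling geometry of rank 4: a polymatroid `f` on `E`, a generating
set `S` with involution and distinguished element `e`, a distinguished independent
basis `b₁,…,b₄`, and elements `s_{i,j}` on the lines spanned by pairs of basis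
elements, satisfying the coherence condition. -/
structure PDG4 (E S : Type*) where
  f : Set E → ℝ
  f_empty : f ∅ = 0
  f_mono : ∀ A B : Set E, A ⊆ B → f A ≤ f B
  f_submod : ∀ A B : Set E, f (A ∪ B) + f (A ∩ B) ≤ f A + f B
  inv : S → S
  e : S
  inv_invol : ∀ s, inv (inv s) = s
  inv_e : inv e = e
  b : Fin 4 → E
  rank_basis : ∀ A : Finset (Fin 4), f (b '' (A : Set (Fin 4))) = A.card
  elt : S → Fin 4 → Fin 4 → E
  elt_symm : ∀ s i j, elt s i j = elt (inv s) j i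
  frame : ∀ s (i j : Fin 4), i ≠ j → f {b i, b j, elt s i j} = 2
  rank_elt : ∀ s (i j : Fin 4), i ≠ j → f {elt s i j} = 1
  rank_b_elt : ∀ s (i j : Fin 4), i ≠ j → f {b i, elt s i j} = 2
  coherent : ∀ s (i j k : Fin 4), i ≠ j → j ≠ k → k ≠ i →
    f {elt s i j, elt (inv s) j k, elt e k i} = 2

/-!
Encode an ordered triple `(i, j, k)` of distinct indices, with missing index `m`, as the
permutation `σ` of `Fin 4` with `σ 0, σ 1, σ 2, σ 3 = i, j, k, m`. Replacing the entry at
position `a` by `m` is then right multiplication by `swap a 3`. Since `{x, y, z}` is unordered,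
a cyclic shift of `(s, s', s'')` rotates the triple, so the propagation hypothesis (stated for
the middle position) holds at every position. The transpositions `swap a 3` generate the
symmetric group, hence one good triple makes all 24 good.
-/

open Equiv

theorem Equiv.Perm.forall_of_closed_mul_swap {α : Type*} [DecidableEq α] [Finite α]
    {Q : Perm α → Prop} (c : α) (hQ : ∀ σ a, a ≠ c → Q σ → Q (σ * swap a c))
    {σ : Perm α} (hσ : Q σ) (τ : Perm α) : Q τ := by
  have hswap : ∀ σ x y, x ≠ y → Q σ → Q (σ * swap x y) := by
    intro σ x y hxy h
    by_cases hx : x = c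
    · subst hx
      rw [swap_comm]
      exact hQ σ y hxy.symm h
    by_cases hy : y = c
    · subst hy
      exact hQ σ x hxy h
    -- conjugating `swap y c` by `swap x c` gives `swap x y`
    rw [← swap_mul_swap_mul_swap hy hxy.symm, swap_comm c x, ← mul_assoc, ← mul_assoc]
    exact hQ _ x hx (hQ _ y hy (hQ σ x hx h))
  simpa using swap_induction_on' (motive := fun f => Q (σ * f)) (σ⁻¹ * τ) (by simpa)
    fun f x y hxy h => by simpa only [mul_assoc] using hswap _ x y hxy h

theorem Fin.exists_perm_apply_eq_of_ne {i j k : Fin 4} (hij : i ≠ j) (hjk : j ≠ k) (hki : k ≠ i) :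
    ∃ σ : Perm (Fin 4), σ 0 = i ∧ σ 1 = j ∧ σ 2 = k := by
  revert i j k
  decide

namespace PDG4

variable {E S : Type*} (P : PDG4 E S)

def IsGoodTriple (s s' s'' : S) (i j k : Fin 4) : Prop :=
  P.f {P.elt s i j, P.elt s' j k, P.elt s'' k i} = 2

def HasRelatorPropagation : Prop :=
  ∀ (s s' s'' : S) (i j k m : Fin 4), i ≠ j → i ≠ k → i ≠ m → j ≠ k → j ≠ m → k ≠ m →
    P.IsGoodTriple s s' s'' i j k → P.IsGoodTriple s s' s'' i m k

variable {P} {s s' s'' : S} {i j k m : Fin 4}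

theorem isGoodTriple_rotate :
    P.IsGoodTriple s s' s'' i j k ↔ P.IsGoodTriple s'' s s' k i j := by
  rw [IsGoodTriple, IsGoodTriple, Set.insert_comm (P.elt s'' k i), Set.pair_comm (P.elt s'' k i)]

theorem HasRelatorPropagation.replace_fst (hP : P.HasRelatorPropagation) (hij : i ≠ j)
    (hik : i ≠ k) (him : i ≠ m) (hjk : j ≠ k) (hjm : j ≠ m) (hkm : k ≠ m)
    (h : P.IsGoodTriple s s' s'' i j k) : P.IsGoodTriple s s' s'' m j k :=
  isGoodTriple_rotate.2 <|
    hP _ _ _ k i j m hik.symm hjk.symm hkm hij him hjm (isGoodTriple_rotate.1 h)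

theorem HasRelatorPropagation.replace_thd (hP : P.HasRelatorPropagation) (hij : i ≠ j)
    (hik : i ≠ k) (him : i ≠ m) (hjk : j ≠ k) (hjm : j ≠ m) (hkm : k ≠ m)
    (h : P.IsGoodTriple s s' s'' i j k) : P.IsGoodTriple s s' s'' i j m :=
  isGoodTriple_rotate.1 <|
    hP _ _ _ j k i m hjk hij.symm hjm hik.symm hkm him (isGoodTriple_rotate.2 h)

theorem HasRelatorPropagation.isGoodTriple_mul_swap (hP : P.HasRelatorPropagation)
    {σ : Perm (Fin 4)} {a : Fin 4} (ha : a ≠ 3)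
    (h : P.IsGoodTriple s s' s'' (σ 0) (σ 1) (σ 2)) :
    P.IsGoodTriple s s' s'' ((σ * swap a 3) 0) ((σ * swap a 3) 1) ((σ * swap a 3) 2) := by
  obtain ⟨h01, h02, h03, h12, h13, h23⟩ :
      σ 0 ≠ σ 1 ∧ σ 0 ≠ σ 2 ∧ σ 0 ≠ σ 3 ∧ σ 1 ≠ σ 2 ∧ σ 1 ≠ σ 3 ∧ σ 2 ≠ σ 3 := by
    simp only [ne_eq, σ.injective.eq_iff]
    decide
  fin_cases a
  · simpa [swap_apply_of_ne_of_ne] using hP.replace_fst h01 h02 h03 h12 h13 h23 h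
  · simpa [swap_apply_of_ne_of_ne] using hP _ _ _ _ _ _ _ h01 h02 h03 h12 h13 h23 h
  · simpa [swap_apply_of_ne_of_ne] using hP.replace_thd h01 h02 h03 h12 h13 h23 h
  · exact absurd rfl ha

end PDG4

/-- If Desargues-type relator propagation holds, then a single good triple of
indices makes `(s,s',s'')` a relator. -/
theorem relator_propagation {E S : Type*} (P : PDG4 E S)
    (hprop : ∀ (s s' s'' : S) (i j k m : Fin 4),
      i ≠ j → i ≠ k → i ≠ m → j ≠ k → j ≠ m → k ≠ m →
      P.f {P.elt s i j, P.elt s' j k, P.elt s'' k i} = 2 →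
      P.f {P.elt s i m, P.elt s' m k, P.elt s'' k i} = 2)
    (s s' s'' : S) (p q r : Fin 4) (hpq : p ≠ q) (hqr : q ≠ r) (hrp : r ≠ p)
    (hgood : P.f {P.elt s p q, P.elt s' q r, P.elt s'' r p} = 2) :
    ∀ i j k : Fin 4, i ≠ j → j ≠ k → k ≠ i →
      P.f {P.elt s i j, P.elt s' j k, P.elt s'' k i} = 2 := by
  intro i j k hij hjk hki
  obtain ⟨σ₀, rfl, rfl, rfl⟩ := Fin.exists_perm_apply_eq_of_ne hpq hqr hrp
  obtain ⟨σ, rfl, rfl, rfl⟩ := Fin.exists_perm_apply_eq_of_ne hij hjk hki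
  exact Perm.forall_of_closed_mul_swap (Q := fun σ => P.IsGoodTriple s s' s'' (σ 0) (σ 1) (σ 2))
    3 (fun _ _ => PDG4.HasRelatorPropagation.isGoodTriple_mul_swap hprop) hgood σ
end

section
/- Let S be a set with an involution s ↦ s⁻¹ and a distinguished element e with e⁻¹ = e, equipped with a symmetric ternary relation R(s,s',s'') ('relator') that is closed under cyclic shifts and inversions (R(s,s',s'') implies R(s',s'',s) and R(s''⁻¹, s'⁻¹, s⁻¹)), satisfies R(s,s⁻¹,e) for all s, is total (for all s,s' there is t with R(s,s',t⁻¹)), is well-defined up to a parallelism equivalence relation ∼ (relators with two entries ∼-equivalent have third entries ∼-equivalent), and satisfies the Desargues associativity property: if R(x,y,s⁻¹), R(y,z,v⁻¹), and R(s,z,p) then R(x,v,p). Then S/∼ with product [s]·[s'] = [t⁻¹] for any t with R(s,s',t) is a group with identity [e] and inverse [s]⁻¹ = [s⁻¹]. -/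
/-! The relator axioms make the third entry of a relator a function of the first two, up to `∼`:
cyclic shifts of `R(s, s⁻¹, e)` give `R(e, s, s⁻¹)`, so well-definedness carries `∼` through the
involution. Hence `[s]·[s'] = [t⁻¹]` for `R(s, s', t)` is a well-defined operation. The identities
`R(e, s, s⁻¹)`, `R(s⁻¹, s, e)` and `R(s, s⁻¹, e)` give the left unit and both inverse laws; the
Desargues property gives associativity and, applied to the relators `R(s, s⁻¹, e)`, `R(s⁻¹, s, e)`,
`R(e, s, s⁻¹)`, the right unit law `R(s, e, s⁻¹)`. -/

structure IsRelatorSystem {S : Type*} (inv : S → S) (e : S) (R : S → S → S → Prop)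
    (sd : Setoid S) : Prop where
  inv_inv : ∀ s, inv (inv s) = s
  inv_unit : inv e = e
  cyc : ∀ {s s' s''}, R s s' s'' → R s' s'' s
  rel_self_inv : ∀ s, R s (inv s) e
  total : ∀ s s', ∃ t, R s s' (inv t)
  congr : ∀ {a b c a' b' c'}, R a b c → R a' b' c' → a ≈ a' → b ≈ b' → c ≈ c'
  desargues : ∀ {x y z s v p}, R x y (inv s) → R y z (inv v) → R s z p → R x v p

namespace IsRelatorSystem

variable {S : Type*} {inv : S → S} {e : S} {R : S → S → S → Prop} {sd : Setoid S}
  (h : IsRelatorSystem inv e R sd)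

include h

theorem rel_unit_left (s : S) : R e s (inv s) :=
  h.cyc (h.cyc (h.rel_self_inv s))

theorem rel_inv_right (s : S) : R s (inv s) (inv e) := by
  rw [h.inv_unit]
  exact h.rel_self_inv s

theorem rel_inv_left (s : S) : R (inv s) s (inv e) := by
  simpa only [h.inv_inv] using h.rel_inv_right (inv s)

theorem rel_unit_right (s : S) : R s e (inv s) :=
  h.desargues (h.rel_inv_right s) (h.rel_inv_left s) (h.rel_unit_left s)

theorem inv_congr {a b : S} (hab : a ≈ b) : inv a ≈ inv b :=
  h.congr (h.rel_unit_left a) (h.rel_unit_left b) (Setoid.refl e) hab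

theorem equiv_of_rel {a b a' b' c c' : S} (hc : R a b (inv c)) (hc' : R a' b' (inv c'))
    (ha : a ≈ a') (hb : b ≈ b') : c ≈ c' := by
  simpa only [h.inv_inv] using h.inv_congr (h.congr hc hc' ha hb)

noncomputable def prod (s s' : S) : S :=
  (h.total s s').choose

theorem rel_prod (s s' : S) : R s s' (inv (h.prod s s')) :=
  (h.total s s').choose_spec

noncomputable def mul : Quotient sd → Quotient sd → Quotient sd :=
  Quotient.map₂ h.prod fun _ _ ha _ _ hb =>
    h.equiv_of_rel (h.rel_prod _ _) (h.rel_prod _ _) ha hb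

def invQ : Quotient sd → Quotient sd :=
  Quotient.map inv fun _ _ => h.inv_congr

theorem mk_mul_mk {s s' t : S} (hR : R s s' (inv t)) : h.mul ⟦s⟧ ⟦s'⟧ = ⟦t⟧ :=
  Quotient.sound (h.equiv_of_rel (h.rel_prod s s') hR (Setoid.refl s) (Setoid.refl s'))

theorem mul_assoc (a b c : Quotient sd) : h.mul (h.mul a b) c = h.mul a (h.mul b c) := by
  induction a, b, c using Quotient.inductionOn₃ with
  | h x y z =>
    have hxyz := h.desargues (h.rel_prod x y) (h.rel_prod y z) (h.rel_prod (h.prod x y) z)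
    rw [h.mk_mul_mk (h.rel_prod x y), h.mk_mul_mk (h.rel_prod y z),
      h.mk_mul_mk (h.rel_prod _ z), h.mk_mul_mk hxyz]

theorem one_mul (a : Quotient sd) : h.mul ⟦e⟧ a = a :=
  Quotient.inductionOn a fun s => h.mk_mul_mk (h.rel_unit_left s)

theorem mul_one (a : Quotient sd) : h.mul a ⟦e⟧ = a :=
  Quotient.inductionOn a fun s => h.mk_mul_mk (h.rel_unit_right s)

theorem inv_mul_cancel (a : Quotient sd) : h.mul (h.invQ a) a = ⟦e⟧ :=
  Quotient.inductionOn a fun s => h.mk_mul_mk (h.rel_inv_left s)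

theorem mul_inv_cancel (a : Quotient sd) : h.mul a (h.invQ a) = ⟦e⟧ :=
  Quotient.inductionOn a fun s => h.mk_mul_mk (h.rel_inv_right s)

end IsRelatorSystem

theorem group_from_relators_general {S : Type*} (inv : S → S) (e : S)
    (R : S → S → S → Prop) (sd : Setoid S)
    (hinv : ∀ s, inv (inv s) = s) (hinve : inv e = e)
    (hcyc : ∀ s s' s'', R s s' s'' → R s' s'' s)
    (hid : ∀ s, R s (inv s) e)
    (htotal : ∀ s s', ∃ t, R s s' (inv t))
    (hwd : ∀ a b c a' b' c', R a b c → R a' b' c' →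
      sd.r a a' → sd.r b b' → sd.r c c')
    (hdes : ∀ x y z s v p, R x y (inv s) → R y z (inv v) → R s z p → R x v p) :
    ∃ (mul : Quotient sd → Quotient sd → Quotient sd) (one : Quotient sd)
      (iv : Quotient sd → Quotient sd),
      (∀ a b c, mul (mul a b) c = mul a (mul b c)) ∧
      (∀ a, mul one a = a) ∧ (∀ a, mul a one = a) ∧
      (∀ a, mul (iv a) a = one) ∧ (∀ a, mul a (iv a) = one) ∧
      one = Quotient.mk sd e ∧
      (∀ s, iv (Quotient.mk sd s) = Quotient.mk sd (inv s)) ∧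
      (∀ s s' t, R s s' t →
        mul (Quotient.mk sd s) (Quotient.mk sd s') = Quotient.mk sd (inv t)) := by
  have h : IsRelatorSystem inv e R sd :=
    ⟨hinv, hinve, fun {_ _ _} => hcyc _ _ _, hid, htotal, fun {_ _ _ _ _ _} => hwd _ _ _ _ _ _,
      fun {_ _ _ _ _ _} => hdes _ _ _ _ _ _⟩
  refine ⟨h.mul, ⟦e⟧, h.invQ, h.mul_assoc, h.one_mul, h.mul_one, h.inv_mul_cancel,
    h.mul_inv_cancel, rfl, fun _ => rfl, fun s s' t hR => h.mk_mul_mk ?_⟩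
  rwa [hinv]

/-- Group recovery from a relator relation with the listed algebraic properties
(abstraction of the geometric product on an almost entropic PDG of rank 4
closed under geometric products). -/
theorem group_from_relators {S : Type*} (inv : S → S) (e : S)
    (R : S → S → S → Prop) (sd : Setoid S)
    (hinv : ∀ s, inv (inv s) = s) (hinve : inv e = e)
    (hcyc : ∀ s s' s'', R s s' s'' → R s' s'' s)
    (hrinv : ∀ s s' s'', R s s' s'' → R (inv s'') (inv s') (inv s))
    (hid : ∀ s, R s (inv s) e)
    (htotal : ∀ s s', ∃ t, R s s' (inv t))
    (hwd : ∀ a b c a' b' c', R a b c → R a' b' c' →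
      sd.r a a' → sd.r b b' → sd.r c c')
    (hdes : ∀ x y z s v p, R x y (inv s) → R y z (inv v) → R s z p → R x v p) :
    ∃ (mul : Quotient sd → Quotient sd → Quotient sd) (one : Quotient sd)
      (iv : Quotient sd → Quotient sd),
      (∀ a b c, mul (mul a b) c = mul a (mul b c)) ∧
      (∀ a, mul one a = a) ∧ (∀ a, mul a one = a) ∧
      (∀ a, mul (iv a) a = one) ∧ (∀ a, mul a (iv a) = one) ∧
      one = Quotient.mk sd e ∧
      (∀ s, iv (Quotient.mk sd s) = Quotient.mk sd (inv s)) ∧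
      (∀ s s' t, R s s' t →
        mul (Quotient.mk sd s) (Quotient.mk sd s') = Quotient.mk sd (inv t)) :=
  group_from_relators_general inv e R sd hinv hinve hcyc hid htotal hwd hdes
end
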